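/- (Distinguishing two initial states of the same periodic class.) Let C = {i_0,…,i_{L−1}} ∈ 𝒞 be a periodic communicating class with period L, let i, i' ∈ C, and suppose there exist l ∈ {0,…,L−1} and a density matrix ω on H such that f := F(Φ_{i+l}(ω), Φ_{i'+l}(ω)) < 1 (indices taken mod L). Then F( Φ_{C,i}^{(m)}(ω^{⊗m}), Φ_{C,i'}^{(m)}(ω^{⊗m}) ) → 0 as m → ∞. -/

import Mathlib

open Matrix Filter
open scoped BigOperators ComplexOrder

noncomputable section

/-- Operators on the `n`-fold tensor power of a `d`-dimensional Hilbert space. -/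
abbrev MatPow (d n : ℕ) := Matrix (Fin n → Fin d) (Fin n → Fin d) ℂ

/-- A density matrix: positive semidefinite with unit trace. -/
def IsDensity {m : Type*} [Fintype m] (ρ : Matrix m m ℂ) : Prop :=
  ρ.PosSemidef ∧ ρ.trace = 1

/-- Loewner order `A ≤ B`. -/
def Loewner {m : Type*} [Fintype m] (A B : Matrix m m ℂ) : Prop := (B - A).PosSemidef

/-- An orthogonal projection. -/
def IsProjection {m : Type*} [Fintype m] (P : Matrix m m ℂ) : Prop :=
  P.IsHermitian ∧ P * P = P

/-- Positive semidefinite square root (zero on non-PSD input). -/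
def psqrt {m : Type*} [Fintype m] [DecidableEq m] (A : Matrix m m ℂ) : Matrix m m ℂ :=
  letI := Classical.propDecidable A.PosSemidef
  if h : A.PosSemidef then
    h.1.eigenvectorUnitary.1 * diagonal ((↑) ∘ (√·) ∘ h.1.eigenvalues) *
      (star h.1.eigenvectorUnitary : Matrix m m ℂ)
  else 0

/-- Fidelity `F(A,B) = Tr √(√A B √A)` of positive semidefinite operators. -/
def fidelity {m : Type*} [Fintype m] [DecidableEq m] (A B : Matrix m m ℂ) : ℝ :=
  ((psqrt (psqrt A * B * psqrt A)).trace).re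

/-- The trace norm `Tr |A| = Tr √(Aᴴ A)`. -/
def traceNorm {m : Type*} [Fintype m] [DecidableEq m] (A : Matrix m m ℂ) : ℝ :=
  ((psqrt (Aᴴ * A)).trace).re

/-- Von Neumann entropy `S(ρ) = -Tr(ρ log₂ ρ)` (via eigenvalues, base-2 logarithm). -/
def vnEntropy {m : Type*} [Fintype m] [DecidableEq m] (ρ : Matrix m m ℂ) : ℝ :=
  if h : ρ.IsHermitian then -∑ i, h.eigenvalues i * Real.logb 2 (h.eigenvalues i) else 0

/-- Linear maps from operators on an `a`-dimensional space to operators on a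
`b`-dimensional space. -/
abbrev QChannelMap (a b : ℕ) := Matrix (Fin a) (Fin a) ℂ →ₗ[ℂ] Matrix (Fin b) (Fin b) ℂ

/-- The Choi matrix of a linear map. -/
def choiMatrix {a b : ℕ} (Φ : QChannelMap a b) : Matrix (Fin a × Fin b) (Fin a × Fin b) ℂ :=
  Matrix.of fun p p' => Φ (Matrix.single p.1 p'.1 1) p.2 p'.2

/-- Completely positive (positive semidefinite Choi matrix) and trace preserving. -/
def IsCPTP {a b : ℕ} (Φ : QChannelMap a b) : Prop :=
  (choiMatrix Φ).PosSemidef ∧ ∀ ρ : Matrix (Fin a) (Fin a) ℂ, (Φ ρ).trace = ρ.trace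

/-- The `n`-fold tensor product map `Φs 0 ⊗ ⋯ ⊗ Φs (n-1)`. -/
def tensChan {a b : ℕ} (n : ℕ) (Φs : Fin n → QChannelMap a b) (ρ : MatPow a n) :
    MatPow b n :=
  Matrix.of fun y y' => ∑ x : Fin n → Fin a, ∑ x' : Fin n → Fin a,
    ρ x x' * ∏ k, Φs k (Matrix.single (x k) (x' k) 1) (y k) (y' k)

/-- The Markov weight `γ_{i₁} q_{i₁ i₂} ⋯ q_{i_{n-1} i_n}` of a trajectory. -/
def chainWt {I : Type*} (q : I → I → ℝ) (γ : I → ℝ) {n : ℕ} (i : Fin n → I) : ℝ :=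
  ∏ k : Fin n, if k.val = 0 then γ (i k)
    else q (i ⟨k.val - 1, Nat.lt_of_le_of_lt (Nat.pred_le _) k.isLt⟩) (i k)

/-- The memory channel `Φ^{(n)}` with Markovian correlated noise. -/
def memChan {I : Type*} [Fintype I] {a b : ℕ} (q : I → I → ℝ) (γ : I → ℝ)
    (Φ : I → QChannelMap a b) (n : ℕ) (ρ : MatPow a n) : MatPow b n :=
  ∑ i : Fin n → I, chainWt q γ i • tensChan n (fun k => Φ (i k)) ρ

/-- `γ_C = ∑_{i ∈ C} γ_i`. -/
def gammaC {I : Type*} [Fintype I] [DecidableEq I] (γ : I → ℝ) (C : Finset I) : ℝ :=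
  ∑ i ∈ C, γ i

/-- The channel `Φ_C^{(n)}` restricted to the class `C`. -/
def classChan {I : Type*} [Fintype I] [DecidableEq I] {a b : ℕ} (q : I → I → ℝ)
    (γ : I → ℝ) (Φ : I → QChannelMap a b) (C : Finset I) (n : ℕ) (ρ : MatPow a n) :
    MatPow b n :=
  (gammaC γ C)⁻¹ • ∑ i : Fin n → {x // x ∈ C},
    chainWt q γ (fun k => (i k : I)) • tensChan n (fun k => Φ (i k : I)) ρ

/-- The transition matrix of the Markov chain. -/
def qMatrix {I : Type*} [Fintype I] (q : I → I → ℝ) : Matrix I I ℝ := Matrix.of q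

/-- `j` is accessible from `i`. -/
def Accessible {I : Type*} [Fintype I] [DecidableEq I] (q : I → I → ℝ) (i j : I) : Prop :=
  ∃ n : ℕ, 0 < (qMatrix q ^ n) i j

/-- `i` and `j` communicate. -/
def Communicates {I : Type*} [Fintype I] [DecidableEq I] (q : I → I → ℝ) (i j : I) : Prop :=
  Accessible q i j ∧ Accessible q j i

/-- `C` is a communicating class. -/
def IsCommClass {I : Type*} [Fintype I] [DecidableEq I] (q : I → I → ℝ) (C : Finset I) :
    Prop :=
  ∃ i : I, ∀ j, j ∈ C ↔ Communicates q i j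

/-- The class `C` is aperiodic: for each of its states, the gcd of the return
times is `1`. -/
def IsAperiodicClass {I : Type*} [Fintype I] [DecidableEq I] (q : I → I → ℝ)
    (C : Finset I) : Prop :=
  ∀ i ∈ C, ∀ d : ℕ, (∀ n : ℕ, 0 < n → 0 < (qMatrix q ^ n) i i → d ∣ n) → d = 1

/-- The class `C` is a (deterministic) periodic cycle `i₀ → i₁ → ⋯ → i_{L-1} → i₀` of
period `L ≥ 2`, enumerated by the `L`-periodic function `e : ℕ → I`. -/
def IsPeriodicCycle {I : Type*} [Fintype I] [DecidableEq I] (q : I → I → ℝ)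
    (C : Finset I) (L : ℕ) (e : ℕ → I) : Prop :=
  2 ≤ L ∧ (∀ k, e (k + L) = e k) ∧ (∀ j, j ∈ C ↔ ∃ k < L, e k = j) ∧
    (∀ k k', k < L → k' < L → e k = e k' → k = k') ∧ ∀ k, q (e k) (e (k + 1)) = 1

/-- The branch channel `Φ_{C,i_k}^{(n)} = Φ_{i_k} ⊗ Φ_{i_{k+1}} ⊗ ⋯ ⊗ Φ_{i_{k+n-1}}`
of a periodic cycle enumerated by `e`, started at position `k`. -/
def cycleChan {I : Type*} {a b : ℕ} (Φ : I → QChannelMap a b) (e : ℕ → I) (k n : ℕ)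
    (ρ : MatPow a n) : MatPow b n :=
  tensChan n (fun r => Φ (e (k + r.val))) ρ

/-- A finite ensemble of density matrices. -/
def IsEnsemble {m : Type*} [Fintype m] {J : ℕ} (p : Fin J → ℝ)
    (ρ : Fin J → Matrix m m ℂ) : Prop :=
  (∀ j, 0 ≤ p j) ∧ ∑ j, p j = 1 ∧ ∀ j, IsDensity (ρ j)

/-- Mean Holevo quantity of an ensemble for an aperiodic class `C`. -/
def holevoAper {I : Type*} [Fintype I] [DecidableEq I] {a b : ℕ} (q : I → I → ℝ)
    (γ : I → ℝ) (Φ : I → QChannelMap a b) (C : Finset I) (n : ℕ) {J : ℕ}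
    (p : Fin J → ℝ) (ρ : Fin J → MatPow a n) : ℝ :=
  (1 / (n : ℝ)) * (vnEntropy (∑ j, p j • classChan q γ Φ C n (ρ j)) -
    ∑ j, p j * vnEntropy (classChan q γ Φ C n (ρ j)))

/-- Mean Holevo quantity of an ensemble for a periodic cycle of period `L`
enumerated by `e`. -/
def holevoCyc {I : Type*} {a b : ℕ} (Φ : I → QChannelMap a b) (e : ℕ → I) (L n : ℕ)
    {J : ℕ} (p : Fin J → ℝ) (ρ : Fin J → MatPow a n) : ℝ :=
  (1 / ((n : ℝ) * L)) * ∑ k : Fin L,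
    (vnEntropy (cycleChan Φ e k.val n (∑ j, p j • ρ j)) -
      ∑ j, p j * vnEntropy (cycleChan Φ e k.val n (ρ j)))

/-- The mean Holevo quantity `χ̄_C^{(n)}` of a communicating class. -/
def chibarC {I : Type*} [Fintype I] [DecidableEq I] {a b : ℕ} (q : I → I → ℝ)
    (γ : I → ℝ) (Φ : I → QChannelMap a b) (C : Finset I) (n : ℕ) {J : ℕ}
    (p : Fin J → ℝ) (ρ : Fin J → MatPow a n) : ℝ :=
  letI := Classical.propDecidable (∃ L e, IsPeriodicCycle q C L e)
  if h : ∃ L e, IsPeriodicCycle q C L e then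
    holevoCyc Φ h.choose_spec.choose h.choose n p ρ
  else holevoAper q γ Φ C n p ρ

/-- `χ̄_n`: the supremum over ensembles of the minimum over communicating classes
(of positive weight) of the mean Holevo quantities. -/
def chibar {I : Type*} [Fintype I] [DecidableEq I] {a b : ℕ} (q : I → I → ℝ)
    (γ : I → ℝ) (Φ : I → QChannelMap a b) (n : ℕ) : ℝ :=
  sSup {x : ℝ | ∃ (J : ℕ) (p : Fin J → ℝ) (ρ : Fin J → MatPow a n),
    IsEnsemble p ρ ∧
    x = sInf {y : ℝ | ∃ C : Finset I, IsCommClass q C ∧ 0 < gammaC γ C ∧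
      y = chibarC q γ Φ C n p ρ}}

/-- The `n`-use Holevo quantity of the memory channel. -/
def chiN {I : Type*} [Fintype I] {a b : ℕ} (q : I → I → ℝ) (γ : I → ℝ)
    (Φ : I → QChannelMap a b) (n : ℕ) : ℝ :=
  sSup {x : ℝ | ∃ (J : ℕ) (p : Fin J → ℝ) (ρ : Fin J → MatPow a n),
    IsEnsemble p ρ ∧
    x = (1 / (n : ℝ)) * (vnEntropy (∑ j, p j • memChan q γ Φ n (ρ j)) -
      ∑ j, p j * vnEntropy (memChan q γ Φ n (ρ j)))}

/-- A code: densities as codewords and a sub-POVM as decoder. -/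
def IsCode {a b : ℕ} (n N : ℕ) (ρ : Fin N → MatPow a n) (E : Fin N → MatPow b n) : Prop :=
  (∀ k, IsDensity (ρ k)) ∧ (∀ k, (E k).PosSemidef) ∧ Loewner (∑ k, E k) 1

/-- Average probability of error of a code for the memory channel. -/
def avgErr {I : Type*} [Fintype I] {a b : ℕ} (q : I → I → ℝ) (γ : I → ℝ)
    (Φ : I → QChannelMap a b) (n N : ℕ) (ρ : Fin N → MatPow a n)
    (E : Fin N → MatPow b n) : ℝ :=
  (1 / (N : ℝ)) * ∑ k, (1 - ((memChan q γ Φ n (ρ k) * E k).trace).re)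

/-- `R` is an achievable rate for the memory channel. -/
def AchievableRate {I : Type*} [Fintype I] {a b : ℕ} (q : I → I → ℝ) (γ : I → ℝ)
    (Φ : I → QChannelMap a b) (R : ℝ) : Prop :=
  0 ≤ R ∧ ∃ (N : ℕ → ℕ) (ρ : ∀ n, Fin (N n) → MatPow a n)
    (E : ∀ n, Fin (N n) → MatPow b n),
    (∀ n, IsCode n (N n) (ρ n) (E n)) ∧
    (∀ n : ℕ, (2 : ℝ) ^ ((n : ℝ) * R) ≤ (N n : ℝ)) ∧
    Tendsto (fun n => avgErr q γ Φ n (N n) (ρ n) (E n)) atTop (nhds 0)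

/-- The classical capacity: the supremum of achievable rates. -/
def capacity {I : Type*} [Fintype I] {a b : ℕ} (q : I → I → ℝ) (γ : I → ℝ)
    (Φ : I → QChannelMap a b) : ℝ :=
  sSup {R : ℝ | AchievableRate q γ Φ R}

/-- A stochastic matrix. -/
def IsStochastic {I : Type*} [Fintype I] (q : I → I → ℝ) : Prop :=
  (∀ i j, 0 ≤ q i j) ∧ ∀ i, ∑ j, q i j = 1

/-- An invariant probability distribution. -/
def IsInvariantDist {I : Type*} [Fintype I] (q : I → I → ℝ) (γ : I → ℝ) : Prop :=
  (∀ i, 0 ≤ γ i) ∧ ∑ i, γ i = 1 ∧ ∀ j, γ j = ∑ i, γ i * q i j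

/-- The chain is irreducible. -/
def IsIrreducibleChain {I : Type*} [Fintype I] [DecidableEq I] (q : I → I → ℝ) : Prop :=
  ∀ i j, Accessible q i j

/-- The chain is aperiodic. -/
def IsAperiodicChain {I : Type*} [Fintype I] [DecidableEq I] (q : I → I → ℝ) : Prop :=
  ∀ i : I, ∀ d : ℕ, (∀ n : ℕ, 0 < n → 0 < (qMatrix q ^ n) i i → d ∣ n) → d = 1

/-- The index of the `s`-th site of the `r`-th block. -/
def blockIdx {m l : ℕ} (r : Fin m) (s : Fin l) : Fin (m * l) :=
  ⟨r.val * l + s.val, by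
    have h1 := r.isLt
    have h2 := s.isLt
    calc r.val * l + s.val < r.val * l + l := Nat.add_lt_add_left h2 _
      _ = (r.val + 1) * l := by ring
      _ ≤ m * l := Nat.mul_le_mul_right _ h1⟩

/-- The tensor product `ρ 0 ⊗ ρ 1 ⊗ ⋯ ⊗ ρ (m-1)` of `m` states on `l` sites each. -/
def kronFam {d l : ℕ} {m : ℕ} (ρ : Fin m → MatPow d l) : MatPow d (m * l) :=
  Matrix.of fun x x' =>
    ∏ r : Fin m, ρ r (fun s => x (blockIdx r s)) (fun s => x' (blockIdx r s))

/-- The `m`-fold tensor power `ρ^{⊗ m}` of a state on `l` sites. -/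
def kronPow {d l : ℕ} (m : ℕ) (ρ : MatPow d l) : MatPow d (m * l) := kronFam fun _ => ρ

/-- The tensor product `τ 0 ⊗ ⋯ ⊗ τ (n-1)` of single-site states. -/
def kronSites {d n : ℕ} (τ : Fin n → Matrix (Fin d) (Fin d) ℂ) : MatPow d n :=
  Matrix.of fun x x' => ∏ r, τ r (x r) (x' r)

/-- The tensor product of a state on `a` sites and a state on `b` sites. -/
def kron2 {d a b : ℕ} (A : MatPow d a) (B : MatPow d b) : MatPow d (a + b) :=
  Matrix.of fun x x' =>
    A (fun s => x (Fin.castAdd b s)) (fun s => x' (Fin.castAdd b s)) *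
      B (fun t => x (Fin.natAdd a t)) (fun t => x' (Fin.natAdd a t))

/-- `A ⊗ 1 ⊗ B` on `(2m+k)·l` sites, where `A`, `B` act on the first and last `m·l`
sites respectively and the identity acts on the middle `k·l` sites. -/
def threeBlock {d : ℕ} (m k l : ℕ) (A B : MatPow d (m * l)) : MatPow d ((2 * m + k) * l) :=
  Matrix.of fun y y' =>
    A (fun s => y ⟨s.val, by
          have hs := s.isLt
          have h : m * l ≤ (2 * m + k) * l := Nat.mul_le_mul_right _ (by omega)
          omega⟩)
      (fun s => y' ⟨s.val, by
          have hs := s.isLt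
          have h : m * l ≤ (2 * m + k) * l := Nat.mul_le_mul_right _ (by omega)
          omega⟩) *
    (if (fun t : Fin (k * l) => y ⟨m * l + t.val, by
            have ht := t.isLt
            have h : (m + k) * l ≤ (2 * m + k) * l := Nat.mul_le_mul_right _ (by omega)
            have e : (m + k) * l = m * l + k * l := Nat.add_mul _ _ _
            omega⟩) =
        (fun t : Fin (k * l) => y' ⟨m * l + t.val, by
            have ht := t.isLt
            have h : (m + k) * l ≤ (2 * m + k) * l := Nat.mul_le_mul_right _ (by omega)
            have e : (m + k) * l = m * l + k * l := Nat.add_mul _ _ _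
            omega⟩)
      then (1 : ℂ) else 0) *
    B (fun s => y ⟨(m + k) * l + s.val, by
          have hs := s.isLt
          have e : (2 * m + k) * l = (m + k) * l + m * l := by
            rw [show 2 * m + k = (m + k) + m by omega, Nat.add_mul]
          omega⟩)
      (fun s => y' ⟨(m + k) * l + s.val, by
          have hs := s.isLt
          have e : (2 * m + k) * l = (m + k) * l + m * l := by
            rw [show 2 * m + k = (m + k) + m by omega, Nat.add_mul]
          omega⟩)


/-! The branch channels are tensor products of single-site channels, so on `ω^{⊗m}` they
produce product states, and fidelity is multiplicative on product states. The `m`-th fidelity is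
therefore `∏_{r<m} F(Φ_{k₁+r}(ω), Φ_{k₂+r}(ω))`, a product of factors in `[0,1]` that is
`L`-periodic in `r`; the factor `f < 1` recurs every `L` sites, so the product is at most
`f^⌊m/L⌋ → 0`. The bound `F ≤ 1` on states is Cauchy–Schwarz for the Hilbert–Schmidt inner
product, applied to `Tr √(√A B √A) = Tr (W* √B √A)` with `W` the partial isometry in the polar
decomposition of `√B √A`. -/

section TraceInequalities

variable {m n : Type*} [Fintype m] [Fintype n]

lemma trace_conjTranspose_mul_eq_inner (X Y : Matrix m n ℂ) :
    (Xᴴ * Y).trace = inner ℂ (WithLp.toLp 2 fun p : m × n => X p.1 p.2)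
      (WithLp.toLp 2 fun p : m × n => Y p.1 p.2) := by
  simp only [EuclideanSpace.inner_eq_star_dotProduct, Matrix.trace, diag, Matrix.mul_apply,
    dotProduct, Fintype.sum_prod_type]
  rw [Finset.sum_comm]
  simp [mul_comm]

theorem re_trace_conjTranspose_mul_sq_le (X Y : Matrix m n ℂ) :
    (Xᴴ * Y).trace.re ^ 2 ≤ (Xᴴ * X).trace.re * (Yᴴ * Y).trace.re := by
  simp only [trace_conjTranspose_mul_eq_inner, ← RCLike.re_eq_complex_re, inner_self_eq_norm_sq,
    ← mul_pow, ← sq_abs (RCLike.re _)]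
  exact pow_le_pow_left₀ (abs_nonneg _)
    ((RCLike.abs_re_le_norm _).trans (norm_inner_le_norm _ _)) 2

lemma trace_re_nonneg {A : Matrix m m ℂ} (hA : A.PosSemidef) : 0 ≤ A.trace.re :=
  (Complex.nonneg_iff.mp hA.trace_nonneg).1

lemma Matrix.IsHermitian.trace_eq_ofReal_re {A : Matrix m m ℂ} (hA : A.IsHermitian) :
    A.trace = (A.trace.re : ℂ) := by
  have h := A.trace_conjTranspose
  rw [hA.eq] at h
  exact (Complex.conj_eq_iff_re.mp h.symm).symm

lemma trace_mul_re_le_of_isProjection [DecidableEq m] {B P : Matrix m m ℂ} (hB : B.PosSemidef)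
    (hP : IsProjection P) : (B * P).trace.re ≤ B.trace.re := by
  have hQ : (1 - P)ᴴ = 1 - P := by rw [conjTranspose_sub, hP.1.eq, conjTranspose_one]
  have hQQ : (1 - P) * (1 - P) = 1 - P := by
    rw [Matrix.mul_sub, Matrix.sub_mul, Matrix.sub_mul, hP.2]
    simp
  have hcomp : (B * (1 - P)).trace = ((1 - P)ᴴ * B * (1 - P)).trace := by
    rw [hQ, ← Matrix.trace_mul_cycle, Matrix.mul_assoc, hQQ]
  have := trace_re_nonneg (hB.conjTranspose_mul_mul_same (1 - P))
  rw [← hcomp, Matrix.mul_sub, Matrix.mul_one, trace_sub, Complex.sub_re] at this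
  linarith

end TraceInequalities

section SquareRoot

open scoped MatrixOrder

variable {m : Type*} [Fintype m] [DecidableEq m]

lemma psqrt_eq_sqrt {A : Matrix m m ℂ} (hA : A.PosSemidef) : psqrt A = CFC.sqrt A := by
  rw [psqrt, dif_pos hA, CFC.sqrt_eq_real_sqrt A (nonneg_iff_posSemidef.mpr hA),
    cfcₙ_eq_cfc (hf0 := Real.sqrt_zero), hA.1.cfc_eq]
  simp [Matrix.IsHermitian.cfc, Unitary.conjStarAlgAut_apply]

lemma posSemidef_psqrt {A : Matrix m m ℂ} (hA : A.PosSemidef) : (psqrt A).PosSemidef := by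
  rw [psqrt_eq_sqrt hA]
  exact nonneg_iff_posSemidef.mp (CFC.sqrt_nonneg A)

lemma psqrt_mul_psqrt {A : Matrix m m ℂ} (hA : A.PosSemidef) : psqrt A * psqrt A = A := by
  rw [psqrt_eq_sqrt hA]
  exact CFC.sqrt_mul_sqrt_self A (nonneg_iff_posSemidef.mpr hA)

lemma psqrt_eq_of_mul_self_eq {A Q : Matrix m m ℂ} (hA : A.PosSemidef) (hQ : Q.PosSemidef)
    (h : Q * Q = A) : psqrt A = Q := by
  rw [psqrt_eq_sqrt hA]
  exact CFC.sqrt_unique h (nonneg_iff_posSemidef.mpr hQ)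

lemma trace_re_psqrt_nonneg (A : Matrix m m ℂ) : 0 ≤ (psqrt A).trace.re := by
  by_cases hA : A.PosSemidef
  · exact trace_re_nonneg (posSemidef_psqrt hA)
  · simp [psqrt, hA]

end SquareRoot

section Fidelity

variable {m : Type*} [Fintype m] [DecidableEq m]

/-- The witness is `W = Y D⁺` for `D = diagonal c`, whose pseudo-inverse `D⁺` is
`diagonal c⁻¹` thanks to `0⁻¹ = 0`. -/
lemma exists_isProjection_conjTranspose_mul_eq_diagonal {Y : Matrix m m ℂ} {c : m → ℝ}
    (hY : Yᴴ * Y = diagonal (fun i => (c i : ℂ)) * diagonal fun i => (c i : ℂ)) :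
    ∃ W : Matrix m m ℂ, IsProjection (W * Wᴴ) ∧ Wᴴ * Y = diagonal fun i => (c i : ℂ) := by
  set D : Matrix m m ℂ := diagonal fun i => (c i : ℂ)
  set E : Matrix m m ℂ := diagonal fun i => ((c i)⁻¹ : ℂ)
  have hE : Eᴴ = E := by
    rw [diagonal_conjTranspose]
    congr 1
    funext i
    simp [Complex.conj_ofReal]
  have hED : E * (D * D) = D := by
    simp only [D, E, diagonal_mul_diagonal]
    congr 1
    funext i
    rcases eq_or_ne (c i : ℂ) 0 with h | h
    · simp [h]
    · field_simp
  have hEDE : E * E * (D * D) * E * E = E * E := by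
    simp only [D, E, diagonal_mul_diagonal]
    congr 1
    funext i
    rcases eq_or_ne (c i : ℂ) 0 with h | h
    · simp [h]
    · field_simp
  refine ⟨Y * E, ⟨isHermitian_mul_conjTranspose_self _, ?_⟩, ?_⟩
  · calc Y * E * (Y * E)ᴴ * (Y * E * (Y * E)ᴴ) = Y * (E * E * (Yᴴ * Y) * E * E) * Yᴴ := by
          simp only [conjTranspose_mul, hE, Matrix.mul_assoc]
      _ = Y * E * (Y * E)ᴴ := by
          rw [hY, hEDE]
          simp only [conjTranspose_mul, hE, Matrix.mul_assoc]
  · rw [conjTranspose_mul, hE, Matrix.mul_assoc, hY, hED]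

lemma Matrix.PosSemidef.star_eigenvectorUnitary_mul_mul_eq {M : Matrix m m ℂ}
    (hM : M.PosSemidef) :
    star (hM.1.eigenvectorUnitary : Matrix m m ℂ) * M * hM.1.eigenvectorUnitary =
      (diagonal fun i => (√(hM.1.eigenvalues i) : ℂ)) *
        diagonal fun i => (√(hM.1.eigenvalues i) : ℂ) := by
  have h := hM.1.conjStarAlgAut_star_eigenvectorUnitary
  rw [Unitary.conjStarAlgAut_apply, Unitary.coe_star, star_star] at h
  rw [h, diagonal_mul_diagonal]
  congr 1
  funext i
  simp [← Complex.ofReal_mul, Real.mul_self_sqrt (hM.eigenvalues_nonneg i)]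

lemma fidelity_eq_re_trace_diagonal {A B : Matrix m m ℂ}
    (hM : (psqrt A * B * psqrt A).PosSemidef) :
    fidelity A B = (diagonal fun i => (√(hM.1.eigenvalues i) : ℂ)).trace.re := by
  rw [fidelity, psqrt, dif_pos hM, Matrix.trace_mul_cycle, Unitary.coe_star_mul_self, one_mul]
  rfl

theorem fidelity_sq_le {A B : Matrix m m ℂ} (hA : A.PosSemidef) (hB : B.PosSemidef) :
    fidelity A B ^ 2 ≤ A.trace.re * B.trace.re := by
  set S := psqrt A
  set T := psqrt B
  have hS : Sᴴ = S := (posSemidef_psqrt hA).1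
  have hT : Tᴴ = T := (posSemidef_psqrt hB).1
  have hS2 : S * S = A := psqrt_mul_psqrt hA
  have hT2 : T * T = B := psqrt_mul_psqrt hB
  have hM : (S * B * S).PosSemidef := by
    simpa only [hS] using hB.conjTranspose_mul_mul_same S
  set U : Matrix m m ℂ := (hM.1.eigenvectorUnitary : Matrix m m ℂ)
  have hU : U * Uᴴ = 1 := by
    rw [← star_eq_conjTranspose]
    exact Unitary.coe_mul_star_self _
  have hY : (T * S * U)ᴴ * (T * S * U) =
      (diagonal fun i => (√(hM.1.eigenvalues i) : ℂ)) *
        diagonal fun i => (√(hM.1.eigenvalues i) : ℂ) := by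
    calc (T * S * U)ᴴ * (T * S * U) = star U * (S * (T * T) * S) * U := by
          simp only [conjTranspose_mul, hS, hT, star_eq_conjTranspose, Matrix.mul_assoc]
      _ = _ := by
          rw [hT2]
          exact hM.star_eigenvectorUnitary_mul_mul_eq
  obtain ⟨W, hW, hWY⟩ := exists_isProjection_conjTranspose_mul_eq_diagonal hY
  have hTS : ((T * W)ᴴ * (S * U)).trace.re = fidelity A B := by
    rw [fidelity_eq_re_trace_diagonal hM, ← hWY, conjTranspose_mul, hT]
    simp only [Matrix.mul_assoc]
  have hTT : ((T * W)ᴴ * (T * W)).trace.re ≤ B.trace.re := by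
    have h : (T * W)ᴴ * (T * W) = Wᴴ * (B * W) := by
      rw [conjTranspose_mul, hT, ← hT2]
      simp only [Matrix.mul_assoc]
    rw [h, Matrix.trace_mul_comm, Matrix.mul_assoc]
    exact trace_mul_re_le_of_isProjection hB hW
  have hSS : ((S * U)ᴴ * (S * U)).trace.re = A.trace.re := by
    have h : (S * U)ᴴ * (S * U) = Uᴴ * (A * U) := by
      rw [conjTranspose_mul, hS, ← hS2]
      simp only [Matrix.mul_assoc]
    rw [h, Matrix.trace_mul_comm, Matrix.mul_assoc, hU, Matrix.mul_one]
  calc fidelity A B ^ 2 ≤ ((T * W)ᴴ * (T * W)).trace.re * ((S * U)ᴴ * (S * U)).trace.re := by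
        rw [← hTS]
        exact re_trace_conjTranspose_mul_sq_le _ _
    _ ≤ B.trace.re * A.trace.re := by
        rw [hSS]
        exact mul_le_mul_of_nonneg_right hTT (trace_re_nonneg hA)
    _ = A.trace.re * B.trace.re := mul_comm _ _

lemma fidelity_nonneg (A B : Matrix m m ℂ) : 0 ≤ fidelity A B :=
  trace_re_psqrt_nonneg _

lemma fidelity_le_one {A B : Matrix m m ℂ} (hA : IsDensity A) (hB : IsDensity B) :
    fidelity A B ≤ 1 := by
  have h := fidelity_sq_le hA.1 hB.1
  rw [hA.2, hB.2, Complex.one_re, one_mul] at h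
  exact (sq_le_one_iff₀ (fidelity_nonneg A B)).mp h

end Fidelity

section Channels

variable {a b : ℕ}

lemma apply_eq_sum_choiMatrix (Φ : QChannelMap a b) (ρ : Matrix (Fin a) (Fin a) ℂ)
    (y y' : Fin b) : Φ ρ y y' = ∑ x, ∑ x', ρ x x' * choiMatrix Φ (x, y) (x', y') := by
  conv_lhs => rw [Matrix.matrix_eq_sum_single ρ]
  simp only [map_sum, Matrix.sum_apply]
  refine Finset.sum_congr rfl fun x _ => Finset.sum_congr rfl fun x' _ => ?_
  rw [show single x x' (ρ x x') = ρ x x' • single x x' 1 by rw [smul_single, smul_eq_mul, mul_one],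
    map_smul]
  rfl

/-- Writing `ρ = Rᴴ R`, `Φ ρ = ∑_c K_cᴴ (choiMatrix Φ) K_c` with `K_c = (row c of R) ⊗ 1`. -/
lemma posSemidef_apply_of_posSemidef_choiMatrix {Φ : QChannelMap a b}
    (hΦ : (choiMatrix Φ).PosSemidef) {ρ : Matrix (Fin a) (Fin a) ℂ} (hρ : ρ.PosSemidef) :
    (Φ ρ).PosSemidef := by
  set R := psqrt ρ
  have hρR : ρ = Rᴴ * R := by rw [(posSemidef_psqrt hρ).1.eq, psqrt_mul_psqrt hρ]
  let K : Fin a → Matrix (Fin a × Fin b) (Fin b) ℂ := fun c =>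
    Matrix.of fun p y => if p.2 = y then R c p.1 else 0
  have hsum : Φ ρ = ∑ c, (K c)ᴴ * choiMatrix Φ * K c := by
    ext y y'
    rw [apply_eq_sum_choiMatrix, hρR]
    simp only [K, Matrix.sum_apply, Matrix.mul_apply, Fintype.sum_prod_type, Finset.sum_mul,
      conjTranspose_apply, of_apply, apply_ite star, star_zero, ite_mul, zero_mul, mul_ite,
      mul_zero, Finset.sum_ite_eq', Finset.mem_univ, if_true]
    conv_lhs => rw [Finset.sum_comm]
    conv_rhs => rw [Finset.sum_comm]; arg 2; ext x; rw [Finset.sum_comm]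
    exact Finset.sum_congr rfl fun _ _ => Finset.sum_congr rfl fun _ _ =>
      Finset.sum_congr rfl fun _ _ => by ring
  rw [hsum]
  exact posSemidef_sum _ fun c _ => hΦ.conjTranspose_mul_mul_same (K c)

lemma IsCPTP.isDensity_apply {Φ : QChannelMap a b} (hΦ : IsCPTP Φ)
    {ρ : Matrix (Fin a) (Fin a) ℂ} (hρ : IsDensity ρ) : IsDensity (Φ ρ) :=
  ⟨posSemidef_apply_of_posSemidef_choiMatrix hΦ.1 hρ.1, (hΦ.2 ρ).trans hρ.2⟩

end Channels

section ProductStates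

variable {d n : ℕ}

lemma kronSites_mul (A B : Fin n → Matrix (Fin d) (Fin d) ℂ) :
    kronSites A * kronSites B = kronSites fun r => A r * B r := by
  ext x x'
  simp only [kronSites, Matrix.mul_apply, of_apply, Fintype.prod_sum, ← Finset.prod_mul_distrib]

lemma kronSites_conjTranspose (A : Fin n → Matrix (Fin d) (Fin d) ℂ) :
    (kronSites A)ᴴ = kronSites fun r => (A r)ᴴ := by
  ext x x'
  simp only [kronSites, conjTranspose_apply, of_apply, star_prod]

lemma trace_kronSites (A : Fin n → Matrix (Fin d) (Fin d) ℂ) :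
    (kronSites A).trace = ∏ r, (A r).trace := by
  simp only [kronSites, Matrix.trace, diag, of_apply, Fintype.prod_sum]

lemma posSemidef_kronSites {A : Fin n → Matrix (Fin d) (Fin d) ℂ}
    (hA : ∀ r, (A r).PosSemidef) : (kronSites A).PosSemidef := by
  have h : kronSites A = (kronSites fun r => psqrt (A r))ᴴ * kronSites fun r => psqrt (A r) := by
    simp only [kronSites_conjTranspose, kronSites_mul, (posSemidef_psqrt (hA _)).1.eq,
      psqrt_mul_psqrt (hA _)]
  rw [h]
  exact posSemidef_conjTranspose_mul_self _

lemma psqrt_kronSites {A : Fin n → Matrix (Fin d) (Fin d) ℂ} (hA : ∀ r, (A r).PosSemidef) :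
    psqrt (kronSites A) = kronSites fun r => psqrt (A r) :=
  psqrt_eq_of_mul_self_eq (posSemidef_kronSites hA)
    (posSemidef_kronSites fun r => posSemidef_psqrt (hA r))
    (by simp only [kronSites_mul, psqrt_mul_psqrt (hA _)])

lemma fidelity_kronSites {A B : Fin n → Matrix (Fin d) (Fin d) ℂ}
    (hA : ∀ r, (A r).PosSemidef) (hB : ∀ r, (B r).PosSemidef) :
    fidelity (kronSites A) (kronSites B) = ∏ r, fidelity (A r) (B r) := by
  have hM : ∀ r, (psqrt (A r) * B r * psqrt (A r)).PosSemidef := fun r => by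
    simpa only [(posSemidef_psqrt (hA r)).1.eq] using
      (hB r).conjTranspose_mul_mul_same (psqrt (A r))
  rw [fidelity, psqrt_kronSites hA, kronSites_mul, kronSites_mul, psqrt_kronSites hM,
    trace_kronSites, Finset.prod_congr rfl fun r _ => (posSemidef_psqrt (hM r)).1.trace_eq_ofReal_re,
    ← Complex.ofReal_prod, Complex.ofReal_re]
  rfl

lemma tensChan_kronSites {a b : ℕ} (Φs : Fin n → QChannelMap a b)
    (τ : Fin n → Matrix (Fin a) (Fin a) ℂ) :
    tensChan n Φs (kronSites τ) = kronSites fun r => Φs r (τ r) := by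
  ext y y'
  simp only [tensChan, kronSites, of_apply]
  rw [Finset.prod_congr rfl fun r _ => apply_eq_sum_choiMatrix (Φs r) (τ r) (y r) (y' r)]
  simp only [Fintype.prod_sum, Finset.prod_mul_distrib]
  rfl

end ProductStates

lemma prod_range_le_pow_div {g : ℕ → ℝ} {L l : ℕ} (hg0 : ∀ r, 0 ≤ g r) (hg1 : ∀ r, g r ≤ 1)
    (hper : Function.Periodic g L) (hl : l < L) (m : ℕ) :
    ∏ r ∈ Finset.range m, g r ≤ g l ^ (m / L) := by
  classical
  set s := (Finset.range (m / L)).image fun j => j * L + l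
  have hs : s ⊆ Finset.range m := by
    intro r hr
    obtain ⟨j, hj, rfl⟩ := Finset.mem_image.mp hr
    have hjL : (j + 1) * L ≤ m / L * L := Nat.mul_le_mul_right L (Finset.mem_range.mp hj)
    have hmL := Nat.div_mul_le_self m L
    simp only [Finset.mem_range]
    nlinarith
  have hinj : Set.InjOn (fun j => j * L + l) (Finset.range (m / L)) := fun i _ j _ h => by
    simpa [show L ≠ 0 by omega] using h
  have hgl : ∀ j, g (j * L + l) = g l := fun j => by
    rw [add_comm]
    exact hper.nat_mul j l
  calc ∏ r ∈ Finset.range m, g r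
      = (∏ r ∈ Finset.range m \ s, g r) * ∏ r ∈ s, g r := (Finset.prod_sdiff hs).symm
    _ ≤ 1 * ∏ r ∈ s, g r := by
        gcongr
        · exact Finset.prod_nonneg fun r _ => hg0 r
        · exact Finset.prod_le_one (fun r _ => hg0 r) fun r _ => hg1 r
    _ = g l ^ (m / L) := by simp [s, Finset.prod_image hinj, hgl]

theorem tendsto_prod_range_of_periodic {g : ℕ → ℝ} {L l : ℕ} (hg0 : ∀ r, 0 ≤ g r)
    (hg1 : ∀ r, g r ≤ 1) (hper : Function.Periodic g L) (hL : 0 < L) (hl : g l < 1) :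
    Tendsto (fun m => ∏ r ∈ Finset.range m, g r) atTop (nhds 0) := by
  rw [← hper.map_mod_nat] at hl
  exact squeeze_zero (fun m => Finset.prod_nonneg fun r _ => hg0 r)
    (prod_range_le_pow_div hg0 hg1 hper (Nat.mod_lt l hL))
    ((tendsto_pow_atTop_nhds_zero_of_lt_one (hg0 _) hl).comp (Nat.tendsto_div_const_atTop hL.ne'))

theorem distinguish_states_periodic_class_general {I : Type} [Fintype I] [DecidableEq I] {dH dK : ℕ}
    (q : I → I → ℝ) (Φ : I → QChannelMap dH dK) (hΦ : ∀ i, IsCPTP (Φ i)) (C : Finset I)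
    (L : ℕ) (e : ℕ → I) (hcyc : IsPeriodicCycle q C L e) (k₁ k₂ : ℕ) (l : ℕ)
    (ω : Matrix (Fin dH) (Fin dH) ℂ) (hω : IsDensity ω)
    (hfid : fidelity (Φ (e (k₁ + l)) ω) (Φ (e (k₂ + l)) ω) < 1) :
    Tendsto (fun m : ℕ =>
        fidelity (cycleChan Φ e k₁ m (kronSites fun _ : Fin m => ω))
          (cycleChan Φ e k₂ m (kronSites fun _ : Fin m => ω)))
      atTop (nhds 0) := by
  obtain ⟨hL, hper, -⟩ := hcyc
  have hout : ∀ i, IsDensity (Φ i ω) := fun i => (hΦ i).isDensity_apply hω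
  have hprod : ∀ m, fidelity (cycleChan Φ e k₁ m (kronSites fun _ : Fin m => ω))
      (cycleChan Φ e k₂ m (kronSites fun _ : Fin m => ω)) =
      ∏ r ∈ Finset.range m, fidelity (Φ (e (k₁ + r)) ω) (Φ (e (k₂ + r)) ω) := fun m => by
    rw [cycleChan, cycleChan, tensChan_kronSites, tensChan_kronSites,
      fidelity_kronSites (fun r => (hout _).1) (fun r => (hout _).1),
      Fin.prod_univ_eq_prod_range (fun r => fidelity (Φ (e (k₁ + r)) ω) (Φ (e (k₂ + r)) ω))]
  simp_rw [hprod]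
  refine tendsto_prod_range_of_periodic (L := L) (fun r => fidelity_nonneg _ _)
    (fun r => fidelity_le_one (hout _) (hout _)) (fun r => ?_) (by omega) hfid
  simp only [← add_assoc, hper]

/-- Distinguishing two initial states of the same periodic class. -/
theorem distinguish_states_periodic_class {I : Type} [Fintype I] [DecidableEq I] {dH dK : ℕ}
    (q : I → I → ℝ) (γ : I → ℝ) (Φ : I → QChannelMap dH dK)
    (hq : IsStochastic q) (hγ : IsInvariantDist q γ) (hΦ : ∀ i, IsCPTP (Φ i))
    (C : Finset I) (hC : IsCommClass q C) (hγC : 0 < gammaC γ C)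
    (L : ℕ) (e : ℕ → I) (hcyc : IsPeriodicCycle q C L e)
    (k₁ k₂ : ℕ) (hk₁ : k₁ < L) (hk₂ : k₂ < L) (l : ℕ) (hl : l < L)
    (ω : Matrix (Fin dH) (Fin dH) ℂ) (hω : IsDensity ω)
    (hfid : fidelity (Φ (e (k₁ + l)) ω) (Φ (e (k₂ + l)) ω) < 1) :
    Tendsto (fun m : ℕ =>
        fidelity (cycleChan Φ e k₁ m (kronSites fun _ : Fin m => ω))
          (cycleChan Φ e k₂ m (kronSites fun _ : Fin m => ω)))
      atTop (nhds 0) :=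
  distinguish_states_periodic_class_general q Φ hΦ C L e hcyc k₁ k₂ l ω hω hfid

end
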